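/- arXiv:2001.03082 — 2 statements merged into one kernel-verified Lean document; each statement's English description precedes it below -/
import Mathlib

section
/- Let x be a point on a chord of the circle of radius R whose endpoints lie on the circle, with n the outward unit normal to the chord. Writing d(x) = R − |x| for the distance from x to the circle and δ(x) = √(R² − |x|² + (x·n)²) − x·n for the distance along the normal, one has 0 ≤ d(x) ≤ δ(x), and δ(x) − d(x) ≤ C h⁴ where h is the length of the chord and C depends only on R (assuming h ≤ R). -/
/-! Along the chord the normal coordinate `t = ⟪x, n⟫` is constant, and in the plane the
tangential coordinate `s` of `x` obeys `s² ≤ R² - t² = h² / 4`. Writing `α = R² - t²`, `ε = s²`,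
`A = √(R² - ε)` and `B = √(t² + ε)`, we have `δ = A - t` and `d = R - B`, and rationalising the four
differences of square roots gives
`δ - d = (α - ε) ((R - A) + (B - t)) / ((A + t) (R + B))` with `(R - A) + (B - t) ≤ 2 ε / R`.
Hence `0 ≤ δ - d ≤ α² / (2 R³) = h⁴ / (32 R³)`. -/

lemma sub_eq_sq_sub_sq_div_add {p q : ℝ} (h : 0 < p + q) : p - q = (p ^ 2 - q ^ 2) / (p + q) := by
  rw [eq_div_iff h.ne']; ring

lemma chord_gap_bounds {R t s : ℝ} (hR : 0 < R) (ht : 0 ≤ t) (hs : s ^ 2 ≤ R ^ 2 - t ^ 2)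
    (hRt : 4 * (R ^ 2 - t ^ 2) ≤ R ^ 2) :
    0 ≤ (√(R ^ 2 - s ^ 2) - t) - (R - √(t ^ 2 + s ^ 2)) ∧
      (√(R ^ 2 - s ^ 2) - t) - (R - √(t ^ 2 + s ^ 2)) ≤ (R ^ 2 - t ^ 2) ^ 2 / (2 * R ^ 3) := by
  set α := R ^ 2 - t ^ 2 with hα
  set ε := s ^ 2
  set A := √(R ^ 2 - ε)
  set B := √(t ^ 2 + ε)
  have hε : 0 ≤ ε := sq_nonneg s
  have hA2 : A ^ 2 = R ^ 2 - ε := Real.sq_sqrt (by linarith)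
  have hB2 : B ^ 2 = t ^ 2 + ε := Real.sq_sqrt (by positivity)
  have htR : R ≤ 2 * t := by nlinarith
  have htA : t ≤ A := Real.le_sqrt_of_sq_le (by linarith)
  have htB : t ≤ B := Real.le_sqrt_of_sq_le (by linarith)
  have hRA : R - A = ε / (R + A) := by rw [sub_eq_sq_sub_sq_div_add (by linarith), hA2]; ring
  have hBt : B - t = ε / (B + t) := by rw [sub_eq_sq_sub_sq_div_add (by linarith), hB2]; ring
  have hAt : A - t = (α - ε) / (A + t) := by
    rw [sub_eq_sq_sub_sq_div_add (by linarith), hA2, hα]; ring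
  have hRB : R - B = (α - ε) / (R + B) := by
    rw [sub_eq_sq_sub_sq_div_add (by linarith), hB2, hα]; ring
  have hgap : (A - t) - (R - B) = (α - ε) * ((R - A) + (B - t)) / ((A + t) * (R + B)) := by
    rw [hAt, hRB, div_sub_div _ _ (by linarith) (by linarith)]; ring
  have hg : (R - A) + (B - t) ≤ 2 * ε / R := by
    rw [hRA, hBt]
    have h1 : ε / (R + A) ≤ ε / R := div_le_div_of_nonneg_left hε hR (by linarith)
    have h2 : ε / (B + t) ≤ ε / R := div_le_div_of_nonneg_left hε hR (by linarith)
    linarith [h1, h2, show 2 * ε / R = ε / R + ε / R by ring]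
  have hαε : 0 ≤ α - ε := by linarith
  have hg0 : 0 ≤ (R - A) + (B - t) := by rw [hRA, hBt]; positivity
  refine ⟨by rw [hgap]; positivity, ?_⟩
  rw [hgap, div_le_div_iff₀ (by nlinarith) (by positivity)]
  calc (α - ε) * ((R - A) + (B - t)) * (2 * R ^ 3)
      ≤ (α - ε) * (2 * ε / R) * (2 * R ^ 3) := by gcongr
    _ = 4 * ((α - ε) * ε) * R ^ 2 := by field_simp; ring
    _ ≤ α ^ 2 * R ^ 2 := by gcongr; nlinarith [sq_nonneg (α - 2 * ε)]
    _ ≤ α ^ 2 * ((A + t) * (R + B)) := by gcongr; nlinarith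

open scoped RealInnerProductSpace EuclideanSpace

section TwoDim

variable {E : Type*} [NormedAddCommGroup E] [InnerProductSpace ℝ E] [Fact (Module.finrank ℝ E = 2)]
  (o : Orientation ℝ E (Fin 2)) {n : E}

local notation "ω" => o.areaForm

lemma norm_sq_eq_inner_sq_add_areaForm_sq (hn : ‖n‖ = 1) (v : E) :
    ‖v‖ ^ 2 = ⟪v, n⟫ ^ 2 + ω v n ^ 2 := by
  rw [o.inner_sq_add_areaForm_sq, hn, one_pow, mul_one]

lemma chord_sq_eq_and_areaForm_sq_le {R : ℝ} {a b x : E} (hn : ‖n‖ = 1) (ha : ‖a‖ = R)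
    (hb : ‖b‖ = R) (hab : a ≠ b) (hx : x ∈ segment ℝ a b) (hbn : ⟪b - a, n⟫ = 0) :
    ‖b - a‖ ^ 2 = 4 * (R ^ 2 - ⟪x, n⟫ ^ 2) ∧ ω x n ^ 2 ≤ R ^ 2 - ⟪x, n⟫ ^ 2 := by
  have parseval := norm_sq_eq_inner_sq_add_areaForm_sq o hn
  obtain ⟨c, d, hc, hd, hcd, rfl⟩ := hx
  have hna : ⟪b, n⟫ = ⟪a, n⟫ := by rw [inner_sub_left] at hbn; linarith
  have ht : ⟪c • a + d • b, n⟫ = ⟪a, n⟫ := by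
    rw [inner_add_left, real_inner_smul_left, real_inner_smul_left, hna]
    linear_combination ⟪a, n⟫ * hcd
  have hσ : ω (c • a + d • b) n = c * ω a n + d * ω b n := by simp
  have hσa : ω a n ^ 2 = R ^ 2 - ⟪a, n⟫ ^ 2 := by rw [← ha, parseval a]; ring
  have hσb : ω b n ^ 2 = R ^ 2 - ⟪a, n⟫ ^ 2 := by rw [← hb, parseval b, hna]; ring
  have hσba : ω (b - a) n ^ 2 = ‖b - a‖ ^ 2 := by rw [parseval (b - a), hbn]; ring
  -- in dimension two the endpoints are mirror images across the line `ℝ n`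
  have hσ_neg : ω b n = -ω a n := by
    refine (sq_eq_sq_iff_eq_or_eq_neg.mp (hσb.trans hσa.symm)).resolve_left fun h => hab ?_
    have : ‖b - a‖ ^ 2 = 0 := by rw [← hσba]; simp [h]
    simpa [sub_eq_zero, eq_comm] using this
  rw [ht]
  constructor
  · rw [← hσba, ← hσa]; simp [hσ_neg]; ring
  · rw [hσ, hσ_neg, ← hσa]
    have hcd4 : (c * ω a n + d * -ω a n) ^ 2 = ω a n ^ 2 - 4 * c * d * ω a n ^ 2 := by
      linear_combination (c + d + 1) * ω a n ^ 2 * hcd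
    rw [hcd4]
    linarith [mul_nonneg (mul_nonneg (mul_nonneg zero_le_four hc) hd) (sq_nonneg (ω a n))]

end TwoDim

/-- For a point `x` on a chord of the circle of radius `R` (endpoints
`a`, `b` on the circle), `n` the outward unit normal to the chord, `d(x) = R − ‖x‖`
and `δ(x) = √(R² − ‖x‖² + (x·n)²) − x·n`, one has `0 ≤ d(x) ≤ δ(x)` and
`δ(x) − d(x) ≤ C h⁴` with `h` the chord length and `C` depending only on `R`
(assuming `h ≤ R`). -/
theorem stmt2 (R : ℝ) (hR : 0 < R) :
    ∃ C > 0, ∀ (a b x n : EuclideanSpace ℝ (Fin 2)),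
      ‖a‖ = R → ‖b‖ = R → a ≠ b →
      x ∈ segment ℝ a b →
      ‖n‖ = 1 → (inner ℝ (b - a) n : ℝ) = 0 → 0 < (inner ℝ x n : ℝ) →
      ‖b - a‖ ≤ R →
      0 ≤ R - ‖x‖ ∧
      R - ‖x‖ ≤ Real.sqrt (R ^ 2 - ‖x‖ ^ 2 + (inner ℝ x n : ℝ) ^ 2) - (inner ℝ x n : ℝ) ∧
      (Real.sqrt (R ^ 2 - ‖x‖ ^ 2 + (inner ℝ x n : ℝ) ^ 2) - (inner ℝ x n : ℝ)) - (R - ‖x‖)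
        ≤ C * ‖b - a‖ ^ 4 := by
  refine ⟨1 / (32 * R ^ 3), by positivity, fun a b x n ha hb hab hx hn hbn hxn hbaR => ?_⟩
  let o := (EuclideanSpace.basisFun (Fin 2) ℝ).toBasis.orientation
  obtain ⟨hchord, hs⟩ := chord_sq_eq_and_areaForm_sq_le o hn ha hb hab hx hbn
  have hx2 := norm_sq_eq_inner_sq_add_areaForm_sq o hn x
  have hnorm : ‖x‖ = √(⟪x, n⟫ ^ 2 + o.areaForm x n ^ 2) := by
    rw [← hx2, Real.sqrt_sq (norm_nonneg x)]
  have harg : R ^ 2 - ‖x‖ ^ 2 + ⟪x, n⟫ ^ 2 = R ^ 2 - o.areaForm x n ^ 2 := by linarith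
  have hRt : 4 * (R ^ 2 - ⟪x, n⟫ ^ 2) ≤ R ^ 2 := by
    rw [← hchord]; exact pow_le_pow_left₀ (norm_nonneg _) hbaR 2
  obtain ⟨hlow, hup⟩ := chord_gap_bounds hR hxn.le hs hRt
  rw [harg, hnorm]
  refine ⟨sub_nonneg.2 (Real.sqrt_le_iff.mpr ⟨hR.le, by linarith⟩), by linarith, hup.trans_eq ?_⟩
  rw [show ‖b - a‖ ^ 4 = (‖b - a‖ ^ 2) ^ 2 by ring, hchord]
  field_simp
  ring
end

section
/- Suppose for every edge e ⊂ Γ of length h_e one has max_{x∈e} |δ(x)| ≤ C₀ h_e², and suppose v satisfies the inverse/trace estimate ‖∇v‖²_{L²(T)} ≤ C h_e⁻¹ ‖v‖²_{L²(e)} on each boundary triangle T with edge e ⊂ Γ, with ∇v = 0 on all other triangles. Then ‖v‖_a := (Σ_T ‖∇v‖²_{L²(T)})^{1/2} ≤ c₁ √h |v|_c, where |v|_c² := ∫_Γ v²/|δ| ds, h = max h_e, and c₁ depends only on C, C₀. -/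
/-- Lemma 7, abstract form: if on each boundary triangle/edge `i`
the inverse/trace estimate `gradT i ≤ C (h_e i)⁻¹ L2e i` holds
(`gradT i = ‖∇v‖²_{L²(T_i)}`, `L2e i = ‖v‖²_{L²(e_i)}`), and the geometric bound
`|δ| ≤ C₀ h_e²` gives `L2e i ≤ C₀ (h_e i)² wgt i` (`wgt i = ∫_{e_i} v²/|δ|`),
with `h_e i ≤ h`, then `‖v‖_a = √(Σ gradT) ≤ c₁ √h |v|_c = c₁ √h √(Σ wgt)`,
where `c₁` depends only on `C`, `C₀`. -/
theorem stmt11 (C C₀ : ℝ) (hC : 0 ≤ C) (hC₀ : 0 ≤ C₀) :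
    ∃ c₁ > 0, ∀ (ι : Type) (s : Finset ι) (gradT L2e wgt he : ι → ℝ) (h : ℝ),
      0 ≤ h →
      (∀ i ∈ s, 0 ≤ gradT i) → (∀ i ∈ s, 0 ≤ L2e i) → (∀ i ∈ s, 0 ≤ wgt i) →
      (∀ i ∈ s, 0 < he i) → (∀ i ∈ s, he i ≤ h) →
      (∀ i ∈ s, gradT i ≤ C * (he i)⁻¹ * L2e i) →
      (∀ i ∈ s, L2e i ≤ C₀ * (he i) ^ 2 * wgt i) →
      Real.sqrt (∑ i ∈ s, gradT i) ≤
        c₁ * Real.sqrt h * Real.sqrt (∑ i ∈ s, wgt i) := by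
  refine ⟨Real.sqrt (C * C₀) + 1, by positivity, ?_⟩
  intro ι s gradT L2e wgt he h hh hg hL hw hhe hheh hinv hgeo
  have key : ∑ i ∈ s, gradT i ≤ (C * C₀) * h * ∑ i ∈ s, wgt i := by
    rw [Finset.mul_sum]
    refine Finset.sum_le_sum fun i hi => ?_
    have hpos := hhe i hi
    calc gradT i ≤ C * (he i)⁻¹ * L2e i := hinv i hi
      _ ≤ C * (he i)⁻¹ * (C₀ * (he i) ^ 2 * wgt i) := by
          have := hgeo i hi
          exact mul_le_mul_of_nonneg_left this (by positivity)
      _ = C * C₀ * he i * wgt i := by field_simp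
      _ ≤ C * C₀ * h * wgt i := by
          have := hheh i hi
          have hwi := hw i hi
          nlinarith [mul_nonneg (mul_nonneg (mul_nonneg hC hC₀) hwi) (sub_nonneg.mpr this)]
  have hsum : 0 ≤ ∑ i ∈ s, wgt i := Finset.sum_nonneg hw
  calc Real.sqrt (∑ i ∈ s, gradT i) ≤ Real.sqrt ((C * C₀) * h * ∑ i ∈ s, wgt i) :=
        Real.sqrt_le_sqrt key
    _ = Real.sqrt (C * C₀) * Real.sqrt h * Real.sqrt (∑ i ∈ s, wgt i) := by
        rw [Real.sqrt_mul (by positivity), Real.sqrt_mul (by positivity)]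
    _ ≤ (Real.sqrt (C * C₀) + 1) * Real.sqrt h * Real.sqrt (∑ i ∈ s, wgt i) := by
        have h1 : Real.sqrt (C * C₀) ≤ Real.sqrt (C * C₀) + 1 := by linarith
        have : (0:ℝ) ≤ Real.sqrt h := Real.sqrt_nonneg h
        have : (0:ℝ) ≤ Real.sqrt (∑ i ∈ s, wgt i) := Real.sqrt_nonneg _
        gcongr
end
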